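/- Let F be a field of characteristic zero, β ∈ F, and let (σ_n), (τ_n) be sequences of nonzero elements of F satisfying σ_n·σ_{n+1} = β·τ_{n+1}²τ_{n+2}² + τ_n²τ_{n+3}² and τ_n·τ_{n+4} = β·τ_{n+2}² + σ_{n+1} for all n ≥ 0. Then the sequence (τ_n) satisfies the Somos-5 relation τ_n·τ_{n+5} = (1−β)·τ_{n+1}τ_{n+4} + θ·τ_{n+2}τ_{n+3} for all n ≥ 0, with the constant coefficient θ = β·((β·τ₁² + σ₀)·τ₂² + τ₀²τ₃²)·(τ₁² + σ₀) / (σ₀·τ₀·τ₁·τ₂·τ₃). -/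
import Mathlib


/-- the tau functions of the deformed B₂ map satisfy a Somos-5
relation `τ_n·τ_{n+5} = (1−β)·τ_{n+1}τ_{n+4} + θ·τ_{n+2}τ_{n+3}` whose
coefficients are constant along each orbit, with
`θ = β·((β·τ₁² + σ₀)·τ₂² + τ₀²τ₃²)·(τ₁² + σ₀)/(σ₀·τ₀·τ₁·τ₂·τ₃)`. -/
theorem b2_tau_somos5 {F : Type*} [Field F] [CharZero F] (β : F)
    (σ τ : ℕ → F)
    (hσ : ∀ n, σ n ≠ 0) (hτ : ∀ n, τ n ≠ 0)
    (e₁ : ∀ n, σ n * σ (n + 1) = β * (τ (n + 1) ^ 2 * τ (n + 2) ^ 2) + τ n ^ 2 * τ (n + 3) ^ 2)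
    (e₂ : ∀ n, τ n * τ (n + 4) = β * τ (n + 2) ^ 2 + σ (n + 1)) :
    ∀ n, τ n * τ (n + 5) = (1 - β) * (τ (n + 1) * τ (n + 4)) +
      (β * ((β * τ 1 ^ 2 + σ 0) * τ 2 ^ 2 + τ 0 ^ 2 * τ 3 ^ 2) * (τ 1 ^ 2 + σ 0) /
        (σ 0 * τ 0 * τ 1 * τ 2 * τ 3)) * (τ (n + 2) * τ (n + 3)) := by
  -- key translation lemma
  have key : ∀ n, (σ n + τ (n+1) ^ 2) * τ (n+4) = (σ (n+2) + τ (n+3) ^ 2) * τ n := by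
    intro n
    apply mul_left_cancel₀ (hσ (n+1))
    linear_combination τ (n+4) * e₁ n - τ n * e₁ (n+1) +
      (τ n * τ (n+3) ^ 2 - τ (n+1) ^ 2 * τ (n+4)) * e₂ n
  -- constancy of the invariant
  have hM : ∀ n, (σ 0 + τ 1 ^ 2) * (σ 1 + τ 2 ^ 2) * (τ n * τ (n+1) * τ (n+2) * τ (n+3)) =
      (σ n + τ (n+1) ^ 2) * (σ (n+1) + τ (n+2) ^ 2) * (τ 0 * τ 1 * τ 2 * τ 3) := by
    intro n
    induction n with
    | zero => ring
    | succ n ih =>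
      apply mul_left_cancel₀ (hτ n)
      linear_combination τ (n+4) * ih +
        ((σ (n+1) + τ (n+2) ^ 2) * (τ 0 * τ 1 * τ 2 * τ 3)) * key n
  -- pointwise lemma
  have ptw : ∀ n, τ n * τ (n+5) * (τ (n+1) * τ (n+4)) =
      (1 - β) * (τ (n+1) * τ (n+4)) ^ 2 +
      β * ((σ (n+1) + τ (n+2) ^ 2) * (σ (n+2) + τ (n+3) ^ 2)) := by
    intro n
    linear_combination (τ (n+1) * τ (n+5)) * e₂ n + (β * τ (n+2) ^ 2 + σ (n+1)) * e₂ (n+1) +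
      (1 - β) * e₁ (n+1)
  intro n
  have hθ : β * ((β * τ 1 ^ 2 + σ 0) * τ 2 ^ 2 + τ 0 ^ 2 * τ 3 ^ 2) * (τ 1 ^ 2 + σ 0) /
      (σ 0 * τ 0 * τ 1 * τ 2 * τ 3) =
      β * ((σ 0 + τ 1 ^ 2) * (σ 1 + τ 2 ^ 2)) / (τ 0 * τ 1 * τ 2 * τ 3) := by
    rw [div_eq_div_iff (by simp [hσ 0, hτ 0, hτ 1, hτ 2, hτ 3])
      (by simp [hτ 0, hτ 1, hτ 2, hτ 3])]
    linear_combination -β * (τ 1 ^ 2 + σ 0) * (τ 0 * τ 1 * τ 2 * τ 3) * e₁ 0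
  rw [hθ]
  rw [div_mul_eq_mul_div, eq_comm, add_comm, div_add' _ _ _ (by simp [hτ 0, hτ 1, hτ 2, hτ 3]),
    div_eq_iff (by simp [hτ 0, hτ 1, hτ 2, hτ 3])]
  apply mul_left_cancel₀ (mul_ne_zero (hτ (n+1)) (hτ (n+4)))
  linear_combination β * hM (n+1) - (τ 0 * τ 1 * τ 2 * τ 3) * ptw n
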